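/- Let x₁ ≤ ⋯ ≤ xₙ be agent locations partitioned into groups G₁, …, Gₘ with positive weights wⱼ ∈ [w_min, w_max]. Let Y = (x₁, xₙ) and let Y* = (y₁*, y₂*) be any pair with x₁ ≤ y₁* ≤ y₂* ≤ xₙ. Then under the weighted total group cost objective, max_j wⱼ·Σ_{i∈Gⱼ} c(Y, xᵢ) − max_j wⱼ·Σ_{i∈Gⱼ} c(Y*, xᵢ) ≤ w_max·(n−2)·max{y₁* − x₁, xₙ − y₂*}, and max_j wⱼ·Σ_{i∈Gⱼ} c(Y*, xᵢ) ≥ w_min·max{y₁* − x₁, xₙ − y₂*}; consequently max_j wⱼ·Σ_{i∈Gⱼ} c(Y, xᵢ) ≤ (1 + (n−2)·w_max/w_min)·max_j wⱼ·Σ_{i∈Gⱼ} c(Y*, xᵢ). -/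

import Mathlib

/-!
By the triangle inequality, moving the facilities from `(y₁, y₂)` to the extreme agents
`(x₁, xₙ)` raises any agent's cost by at most `D = max (y₁ - x₁) (xₙ - y₂)`, while the two
extreme agents pay nothing at `(x₁, xₙ)`; so every group's total cost rises by at most `(n - 2) D`.
Conversely, under `(y₁, y₂)` the group containing an extreme agent already pays at least `D`,
so the optimal objective is at least `w_min D`. The ratio bound combines the two.
-/

open Finset

lemma min_abs_sub_le_min_abs_sub_add_max (a b y₁ y₂ t : ℝ) :
    min |a - t| |b - t| ≤ min |y₁ - t| |y₂ - t| + max |a - y₁| |b - y₂| := by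
  rw [← min_add_add_right]
  refine min_le_min ?_ ?_
  · linarith [abs_sub_le a y₁ t, le_max_left |a - y₁| |b - y₂|]
  · linarith [abs_sub_le b y₂ t, le_max_right |a - y₁| |b - y₂|]

lemma sub_le_min_abs_sub_left {y₁ y₂ : ℝ} (h : y₁ ≤ y₂) (a : ℝ) :
    y₁ - a ≤ min |y₁ - a| |y₂ - a| :=
  le_min (le_abs_self _) ((sub_le_sub_right h a).trans (le_abs_self _))

lemma sub_le_min_abs_sub_right {y₁ y₂ : ℝ} (h : y₁ ≤ y₂) (b : ℝ) :
    b - y₂ ≤ min |y₁ - b| |y₂ - b| := by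
  rw [abs_sub_comm y₁, abs_sub_comm y₂]
  exact le_min ((sub_le_sub_left h b).trans (le_abs_self _)) (le_abs_self _)

lemma sum_le_sum_add_card_compl_mul {ι : Type*} [Fintype ι] [DecidableEq ι] {f g : ι → ℝ}
    {D : ℝ} (hD : 0 ≤ D) (T : Finset ι) (hT : ∀ i ∈ T, f i ≤ g i) (hle : ∀ i, f i ≤ g i + D)
    (s : Finset ι) : ∑ i ∈ s, f i ≤ ∑ i ∈ s, g i + #Tᶜ * D := by
  have hpt (i : ι) : f i ≤ g i + if i ∈ Tᶜ then D else 0 := by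
    split_ifs with h
    · exact hle i
    · simpa using hT i (by simpa using h)
  calc ∑ i ∈ s, f i ≤ ∑ i ∈ s, (g i + if i ∈ Tᶜ then D else 0) := sum_le_sum fun i _ => hpt i
    _ = ∑ i ∈ s, g i + ∑ i ∈ s, (if i ∈ Tᶜ then D else 0) := sum_add_distrib
    _ ≤ ∑ i ∈ s, g i + ∑ i, (if i ∈ Tᶜ then D else 0) :=
      add_le_add le_rfl
        (sum_le_univ_sum_of_nonneg (f := fun i => if i ∈ Tᶜ then D else 0)
          fun i => by split_ifs <;> simp [hD])
    _ = ∑ i ∈ s, g i + #Tᶜ * D := by rw [sum_ite_mem, univ_inter, sum_const, nsmul_eq_mul]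

lemma sum_min_abs_sub_le_sum_add {ι : Type*} [Fintype ι] (x : ι → ℝ) {i₀ i₁ : ι} (hne : i₀ ≠ i₁)
    {y₁ y₂ : ℝ} (hy₁ : x i₀ ≤ y₁) (hy₂ : y₂ ≤ x i₁) (s : Finset ι) :
    ∑ i ∈ s, min |x i₀ - x i| |x i₁ - x i|
      ≤ ∑ i ∈ s, min |y₁ - x i| |y₂ - x i|
        + ((Fintype.card ι : ℝ) - 2) * max (y₁ - x i₀) (x i₁ - y₂) := by
  classical
  have hD : 0 ≤ max (y₁ - x i₀) (x i₁ - y₂) := le_max_of_le_left (sub_nonneg.2 hy₁)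
  have hcard : ((#({i₀, i₁} : Finset ι)ᶜ : ℕ) : ℝ) = (Fintype.card ι : ℝ) - 2 := by
    have h2 : 2 ≤ Fintype.card ι := by
      simpa [card_pair hne] using card_le_univ ({i₀, i₁} : Finset ι)
    rw [card_compl, card_pair hne, Nat.cast_sub h2, Nat.cast_ofNat]
  rw [← hcard]
  refine sum_le_sum_add_card_compl_mul hD {i₀, i₁} ?_ (fun i => ?_) s
  · simp only [mem_insert, mem_singleton, forall_eq_or_imp, forall_eq, sub_self, abs_zero]
    exact ⟨(min_le_left _ _).trans (by positivity), (min_le_right _ _).trans (by positivity)⟩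
  · have := min_abs_sub_le_min_abs_sub_add_max (x i₀) (x i₁) y₁ y₂ (x i)
    rwa [abs_sub_comm (x i₀) y₁, abs_of_nonneg (sub_nonneg.2 hy₁),
      abs_of_nonneg (sub_nonneg.2 hy₂)] at this

section WeightedMax

variable {ι κ : Type*} [Fintype κ] (hM : (univ : Finset κ).Nonempty) (G : κ → Finset ι)
  {w : κ → ℝ}

lemma sup'_mul_sum_sub_sup'_mul_sum_le {f g : ι → ℝ} {wmax E : ℝ} (hw₀ : ∀ j, 0 ≤ w j)
    (hw : ∀ j, w j ≤ wmax) (hE : 0 ≤ E) (hfg : ∀ j, ∑ i ∈ G j, f i ≤ ∑ i ∈ G j, g i + E) :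
    univ.sup' hM (fun j => w j * ∑ i ∈ G j, f i)
      - univ.sup' hM (fun j => w j * ∑ i ∈ G j, g i) ≤ wmax * E := by
  rw [sub_le_iff_le_add']
  refine sup'_le _ _ fun j _ => ?_
  calc w j * ∑ i ∈ G j, f i ≤ w j * ∑ i ∈ G j, g i + w j * E := by
        rw [← mul_add]; exact mul_le_mul_of_nonneg_left (hfg j) (hw₀ j)
    _ ≤ _ := add_le_add (le_sup' (fun j => w j * ∑ i ∈ G j, g i) (mem_univ j))
        (mul_le_mul_of_nonneg_right (hw j) hE)

lemma mul_le_sup'_mul_sum {g : ι → ℝ} (hg : ∀ i, 0 ≤ g i) {wmin D : ℝ} (hwmin : 0 ≤ wmin)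
    {i : ι} {j : κ} (hij : i ∈ G j) (hwj : wmin ≤ w j) (hDi : D ≤ g i) :
    wmin * D ≤ univ.sup' hM (fun j => w j * ∑ i ∈ G j, g i) :=
  calc wmin * D ≤ wmin * g i := mul_le_mul_of_nonneg_left hDi hwmin
    _ ≤ w j * g i := mul_le_mul_of_nonneg_right hwj (hg i)
    _ ≤ w j * ∑ i ∈ G j, g i :=
        mul_le_mul_of_nonneg_left (single_le_sum (fun i _ => hg i) hij) (hwmin.trans hwj)
    _ ≤ _ := le_sup' (fun j => w j * ∑ i ∈ G j, g i) (mem_univ j)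

end WeightedMax

lemma le_one_add_div_mul {P S D k wmin : ℝ} (hwmin : 0 < wmin) (hk : 0 ≤ k)
    (hPS : P - S ≤ k * D) (hS : wmin * D ≤ S) : P ≤ (1 + k / wmin) * S := by
  have hkD : k * D ≤ k / wmin * S := by
    rw [div_mul_eq_mul_div, le_div_iff₀ hwmin, mul_assoc, mul_comm D]
    exact mul_le_mul_of_nonneg_left hS hk
  linarith

theorem stmt11 (n m : ℕ) (hn : 2 ≤ n) (x : Fin n → ℝ)
    (G : Fin m → Finset (Fin n))
    (hcover : ∀ i : Fin n, ∃ j, i ∈ G j)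
    (w : Fin m → ℝ) (wmin wmax : ℝ) (hminpos : 0 < wmin)
    (hwb : ∀ j, wmin ≤ w j ∧ w j ≤ wmax)
    (hM : (Finset.univ : Finset (Fin m)).Nonempty)
    (c : ℝ → ℝ → ℝ → ℝ) (hc : ∀ z₁ z₂ z, c z₁ z₂ z = min |z₁ - z| |z₂ - z|)
    (y₁ y₂ : ℝ)
    (hy : x ⟨0, by omega⟩ ≤ y₁ ∧ y₁ ≤ y₂ ∧ y₂ ≤ x ⟨n - 1, by omega⟩) :
    (Finset.univ.sup' hM
        (fun j => w j * ∑ i ∈ G j, c (x ⟨0, by omega⟩) (x ⟨n - 1, by omega⟩) (x i))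
      - Finset.univ.sup' hM (fun j => w j * ∑ i ∈ G j, c y₁ y₂ (x i))
      ≤ wmax * ((n : ℝ) - 2) * max (y₁ - x ⟨0, by omega⟩) (x ⟨n - 1, by omega⟩ - y₂)) ∧
    (wmin * max (y₁ - x ⟨0, by omega⟩) (x ⟨n - 1, by omega⟩ - y₂)
      ≤ Finset.univ.sup' hM (fun j => w j * ∑ i ∈ G j, c y₁ y₂ (x i))) ∧
    (Finset.univ.sup' hM
        (fun j => w j * ∑ i ∈ G j, c (x ⟨0, by omega⟩) (x ⟨n - 1, by omega⟩) (x i))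
      ≤ (1 + ((n : ℝ) - 2) * wmax / wmin)
          * Finset.univ.sup' hM (fun j => w j * ∑ i ∈ G j, c y₁ y₂ (x i))) := by
  obtain ⟨hy₁, hy₁₂, hy₂⟩ := hy
  simp only [hc]
  have hne : (⟨0, by omega⟩ : Fin n) ≠ ⟨n - 1, by omega⟩ := by rw [Ne, Fin.mk.injEq]; omega
  have hD : 0 ≤ max (y₁ - x ⟨0, by omega⟩) (x ⟨n - 1, by omega⟩ - y₂) :=
    le_max_of_le_left (sub_nonneg.2 hy₁)
  have hw₀ (j : Fin m) : 0 ≤ w j := hminpos.le.trans (hwb j).1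
  have hwmax : 0 ≤ wmax := let ⟨j, _⟩ := hM; (hw₀ j).trans (hwb j).2
  have hn₂ : (0 : ℝ) ≤ n - 2 := sub_nonneg.2 (Nat.ofNat_le_cast.2 hn)
  have hgroup := sum_min_abs_sub_le_sum_add x hne hy₁ hy₂
  rw [Fintype.card_fin] at hgroup
  have hupper := sup'_mul_sum_sub_sup'_mul_sum_le hM G hw₀ (fun j => (hwb j).2)
    (mul_nonneg hn₂ hD) (fun j => hgroup (G j))
  rw [← mul_assoc] at hupper
  have hlower : wmin * max (y₁ - x ⟨0, by omega⟩) (x ⟨n - 1, by omega⟩ - y₂)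
      ≤ univ.sup' hM (fun j => w j * ∑ i ∈ G j, min |y₁ - x i| |y₂ - x i|) := by
    obtain ⟨j₀, hj₀⟩ := hcover ⟨0, by omega⟩
    obtain ⟨j₁, hj₁⟩ := hcover ⟨n - 1, by omega⟩
    rw [mul_max_of_nonneg _ _ hminpos.le]
    exact max_le
      (mul_le_sup'_mul_sum hM G (fun _ => by positivity) hminpos.le hj₀
        (hwb j₀).1 (sub_le_min_abs_sub_left hy₁₂ _))
      (mul_le_sup'_mul_sum hM G (fun _ => by positivity) hminpos.le hj₁
        (hwb j₁).1 (sub_le_min_abs_sub_right hy₁₂ _))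
  exact ⟨hupper, hlower,
    le_one_add_div_mul hminpos (mul_nonneg hn₂ hwmax) (by linarith) hlower⟩
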